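/- arXiv:1711.11029 — 4 statements merged into one kernel-verified Lean document; each statement's English description precedes it below -/
import Mathlib

section
/- Let Γ be a label cover instance with k right super-nodes and q left super-nodes. If MaxCover(Γ) ≤ ε for some ε > 0, then MinLabel(Γ) ≥ (1/ε)^{1/k} · k. -/
open Finset

/-!
Split a covering multi-labeling `Ŝ` into its parts `Ŝ ∩ W_j`. Every left super-node is covered
by one of the `∏ |Ŝ ∩ W_j|` labelings drawn from these parts, and each labeling covers at most
`ε q` super-nodes, so `∏ |Ŝ ∩ W_j| ≥ 1/ε`. AM–GM then gives
`|Ŝ| = ∑ |Ŝ ∩ W_j| ≥ k (∏ |Ŝ ∩ W_j|)^{1/k} ≥ k (1/ε)^{1/k}`.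
-/

theorem prod_rpow_one_div_card_mul_card_le_sum {ι : Type*} {s : Finset ι} (hs : s.Nonempty)
    {z : ι → ℝ} (hz : ∀ i ∈ s, 0 ≤ z i) :
    (∏ i ∈ s, z i) ^ ((1 : ℝ) / #s) * #s ≤ ∑ i ∈ s, z i := by
  have hpos : (0 : ℝ) < #s := by exact_mod_cast hs.card_pos
  have amgm := Real.geom_mean_le_arith_mean s (fun _ => 1) z (fun _ _ => zero_le_one)
    (by simpa using hpos) hz
  simp only [Real.rpow_one, sum_const, nsmul_eq_mul, mul_one, one_mul] at amgm
  rwa [one_div, ← le_div_iff₀ hpos]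

theorem card_le_card_mul_of_forall_exists_mem {α β : Type*} [Fintype β] [DecidableEq β]
    {L : Finset α} {C : α → Finset β} {m : ℝ} (hcov : ∀ b, ∃ a ∈ L, b ∈ C a)
    (hC : ∀ a ∈ L, (#(C a) : ℝ) ≤ m) :
    (Fintype.card β : ℝ) ≤ #L * m := by
  have hsub : (univ : Finset β) ⊆ L.biUnion C := fun b _ => by
    obtain ⟨a, ha, hb⟩ := hcov b
    exact mem_biUnion.2 ⟨a, ha, hb⟩
  calc (Fintype.card β : ℝ) ≤ #(L.biUnion C) := by exact_mod_cast card_le_card hsub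
    _ ≤ ∑ a ∈ L, (#(C a) : ℝ) := by exact_mod_cast card_biUnion_le
    _ ≤ #L * m := by simpa using sum_le_card_nsmul L _ m hC

section LabelCover

variable {q k : ℕ} {U W : Type} [Fintype U] (pu : U → Fin q) (pw : W → Fin k)
  (E : U → W → Prop) [∀ u w, Decidable (E u w)]

def coveredBy (S : Fin k → W) : Finset (Fin q) :=
  univ.filter fun i => ∃ u, pu u = i ∧ ∀ j, E u (S j)

def labelingsIn (Shat : Finset W) : Finset (Fin k → W) :=
  Fintype.piFinset fun j => Shat.filter (pw · = j)

variable {pu pw E}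

theorem card_labelingsIn (Shat : Finset W) :
    #(labelingsIn pw Shat) = ∏ j, #(Shat.filter (pw · = j)) :=
  Fintype.card_piFinset _

theorem exists_mem_labelingsIn_mem_coveredBy {Shat : Finset W} {i : Fin q}
    (h : ∃ u, pu u = i ∧ ∀ j, ∃ w ∈ Shat, pw w = j ∧ E u w) :
    ∃ S ∈ labelingsIn pw Shat, i ∈ coveredBy pu E S := by
  obtain ⟨u, hu, hlabel⟩ := h
  choose S hS hSj hE using hlabel
  refine ⟨S, ?_, mem_filter.2 ⟨mem_univ _, u, hu, hE⟩⟩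
  simpa [labelingsIn] using fun j => ⟨hS j, hSj j⟩

theorem one_div_le_prod_card_filter {Shat : Finset W} {ε : ℝ} (hq : 0 < q) (hε : 0 < ε)
    (hmax : ∀ S : Fin k → W, (∀ j, pw (S j) = j) → (#(coveredBy pu E S) : ℝ) / q ≤ ε)
    (hcov : ∀ i : Fin q, ∃ u, pu u = i ∧ ∀ j, ∃ w ∈ Shat, pw w = j ∧ E u w) :
    1 / ε ≤ ∏ j, (#(Shat.filter (pw · = j)) : ℝ) := by
  have hq' : (0 : ℝ) < q := by exact_mod_cast hq
  have hcount : (q : ℝ) ≤ #(labelingsIn pw Shat) * (ε * q) := by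
    simpa using card_le_card_mul_of_forall_exists_mem
      (fun i => exists_mem_labelingsIn_mem_coveredBy (hcov i)) fun S hS => by
        refine (div_le_iff₀ hq').1 (hmax S fun j => ?_)
        exact (mem_filter.1 (Fintype.mem_piFinset.1 hS j)).2
  rw [card_labelingsIn] at hcount
  push_cast at hcount
  rw [div_le_iff₀ hε]
  nlinarith

end LabelCover

theorem maxcover_le_imp_minlabel_ge_general (q k : ℕ) (hq : 0 < q) (hk : 0 < k)
    (U W : Type) [Fintype U]
    (pu : U → Fin q) (pw : W → Fin k) (E : U → W → Prop)
    [∀ u w, Decidable (E u w)]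
    (ε : ℝ) (hε : 0 < ε)
    (hmax : ∀ S : Fin k → W, (∀ j, pw (S j) = j) →
      ((Finset.univ.filter fun i : Fin q =>
          ∃ u, pu u = i ∧ ∀ j, E u (S j)).card : ℝ) / q ≤ ε)
    (Shat : Finset W)
    (hcov : ∀ i : Fin q, ∃ u, pu u = i ∧
        ∀ j : Fin k, ∃ w ∈ Shat, pw w = j ∧ E u w) :
    (1 / ε) ^ ((1 : ℝ) / k) * k ≤ (Shat.card : ℝ) := by
  have hprod := one_div_le_prod_card_filter hq hε hmax hcov
  have hk' : (univ : Finset (Fin k)).Nonempty := univ_nonempty_iff.2 ⟨⟨0, hk⟩⟩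
  calc (1 / ε) ^ ((1 : ℝ) / k) * k
      ≤ (∏ j, (#(Shat.filter (pw · = j)) : ℝ)) ^ ((1 : ℝ) / k) * k := by gcongr
    _ ≤ ∑ j, (#(Shat.filter (pw · = j)) : ℝ) := by
      simpa using prod_rpow_one_div_card_mul_card_le_sum hk' fun j _ => Nat.cast_nonneg _
    _ = Shat.card := by
      exact_mod_cast (card_eq_sum_card_fiberwise fun w _ => mem_coe.2 (mem_univ (pw w))).symm

/-- Label cover: left vertices `U` partitioned by `pu` into `q` super-nodes,
right vertices `W` partitioned by `pw` into `k` nonempty super-nodes, edges `E`.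
If every labeling `S` (one vertex `S j` from each right super-node `W j`) covers
at most an `ε` fraction of left super-nodes, then every multi-labeling
`Shat ⊆ W` covering all left super-nodes has size at least `(1/ε)^{1/k} · k`. -/
theorem maxcover_le_imp_minlabel_ge (q k : ℕ) (hq : 0 < q) (hk : 0 < k)
    (U W : Type) [Fintype U] [Fintype W]
    (pu : U → Fin q) (pw : W → Fin k) (E : U → W → Prop)
    [∀ u w, Decidable (E u w)]
    (hW : ∀ j : Fin k, ∃ w : W, pw w = j)
    (ε : ℝ) (hε : 0 < ε)
    (hmax : ∀ S : Fin k → W, (∀ j, pw (S j) = j) →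
      ((Finset.univ.filter fun i : Fin q =>
          ∃ u, pu u = i ∧ ∀ j, E u (S j)).card : ℝ) / q ≤ ε)
    (Shat : Finset W)
    (hcov : ∀ i : Fin q, ∃ u, pu u = i ∧
        ∀ j : Fin k, ∃ w ∈ Shat, pw w = j ∧ E u w) :
    (1 / ε) ^ ((1 : ℝ) / k) * k ≤ (Shat.card : ℝ) :=
  maxcover_le_imp_minlabel_ge_general q k hq hk U W pu pw E ε hε hmax Shat hcov
end

section
/- Let Γ = (U, W; E) be a 'unique' label cover instance with q = 2^r left super-nodes U_1, ..., U_q and k right super-nodes W_1, ..., W_k: for every labeling S and every left super-node U_i, at most one node of U_i is adjacent to all nodes of S. For each j ∈ [k] and each node w ∈ W_j, define a vector a_w ∈ {0,1}^{|U|} indexed by left nodes, with (a_w)_u = 1 iff {u, w} ∈ E. Then for any labeling S = {w_1, ..., w_k} with w_j ∈ W_j, the generalized inner product ⟨a_{w_1}, ..., a_{w_k}⟩ = Σ_{u∈U} ∏_{j∈[k]} (a_{w_j})_u equals exactly the number of left super-nodes covered by S. Consequently, there exist w_j ∈ W_j with ⟨a_{w_1},...,a_{w_k}⟩ ≥ s*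 if and only if MaxCover(Γ) ≥ s*/q. -/
open Finset

lemma key_count (q k : ℕ) (U W : Type) [Fintype U] [Fintype W] [DecidableEq U]
    (pu : U → Fin q) (pw : W → Fin k) (E : U → W → Prop)
    [∀ u w, Decidable (E u w)]
    (hunique : ∀ S : Fin k → W, (∀ j, pw (S j) = j) →
      ∀ u u' : U, pu u = pu u' →
        (∀ j, E u (S j)) → (∀ j, E u' (S j)) → u = u')
    (S : Fin k → W) (hS : ∀ j, pw (S j) = j) :
    (∑ u : U, ∏ j : Fin k, (if E u (S j) then (1 : ℕ) else 0))
        = (Finset.univ.filter fun i : Fin q =>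
            ∃ u, pu u = i ∧ ∀ j, E u (S j)).card := by
  have h1 : (∑ u : U, ∏ j : Fin k, (if E u (S j) then (1 : ℕ) else 0))
      = (Finset.univ.filter fun u : U => ∀ j, E u (S j)).card := by
    simp [Finset.prod_boole, Finset.sum_boole]
  rw [h1]
  apply Finset.card_bij (fun u _ => pu u)
  · intro u hu
    simp only [Finset.mem_filter, Finset.mem_univ, true_and] at hu ⊢
    exact ⟨u, rfl, hu⟩
  · intro u hu u' hu'
    simp only [Finset.mem_filter, Finset.mem_univ, true_and] at hu hu'
    exact fun h => hunique S hS u u' h hu hu'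
  · intro i hi
    simp only [Finset.mem_filter, Finset.mem_univ, true_and] at hi
    obtain ⟨u, hpu, hE⟩ := hi
    exact ⟨u, by simp [hE], hpu⟩

/-- For a 'unique' label cover instance (every labeling has at most one common
neighbor in each left super-node), the generalized inner product of the vectors
`a_w` (indicator vectors of neighborhoods) of a labeling equals the number of
covered left super-nodes; consequently some labeling has inner product `≥ s*`
iff `MaxCover(Γ) ≥ s*/q`. -/
theorem unique_maxcover_inner_product (q k : ℕ) (hq : 0 < q)
    (U W : Type) [Fintype U] [Fintype W] [DecidableEq U]
    (pu : U → Fin q) (pw : W → Fin k) (E : U → W → Prop)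
    [∀ u w, Decidable (E u w)]
    (hunique : ∀ S : Fin k → W, (∀ j, pw (S j) = j) →
      ∀ u u' : U, pu u = pu u' →
        (∀ j, E u (S j)) → (∀ j, E u' (S j)) → u = u') :
    (∀ S : Fin k → W, (∀ j, pw (S j) = j) →
      (∑ u : U, ∏ j : Fin k, (if E u (S j) then (1 : ℕ) else 0))
        = (Finset.univ.filter fun i : Fin q =>
            ∃ u, pu u = i ∧ ∀ j, E u (S j)).card) ∧
    (∀ sstar : ℕ,
      (∃ S : Fin k → W, (∀ j, pw (S j) = j) ∧
        (sstar : ℝ) ≤ ∑ u : U, ∏ j : Fin k, (if E u (S j) then (1 : ℝ) else 0)) ↔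
      (∃ S : Fin k → W, (∀ j, pw (S j) = j) ∧
        (sstar : ℝ) / q ≤
          ((Finset.univ.filter fun i : Fin q =>
              ∃ u, pu u = i ∧ ∀ j, E u (S j)).card : ℝ) / q)) := by
  have key := key_count q k U W pu pw E hunique
  have hreal : ∀ S : Fin k → W,
      (∑ u : U, ∏ j : Fin k, (if E u (S j) then (1 : ℝ) else 0))
        = ((∑ u : U, ∏ j : Fin k, (if E u (S j) then (1 : ℕ) else 0) : ℕ) : ℝ) := by
    intro S; push_cast; rfl
  have hq' : (0 : ℝ) < q := by exact_mod_cast hq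
  refine ⟨key, fun sstar => ?_⟩
  constructor
  · rintro ⟨S, hS, hle⟩
    refine ⟨S, hS, ?_⟩
    rw [div_le_div_iff_of_pos_right hq']
    rw [hreal S, key S hS] at hle
    exact hle
  · rintro ⟨S, hS, hle⟩
    refine ⟨S, hS, ?_⟩
    rw [div_le_div_iff_of_pos_right hq'] at hle
    rw [hreal S, key S hS]
    exact hle
end

section
/- Let G be a graph on vertex set [N] with no self-loops and let k ≥ 2. For each unordered pair {i,j} ⊆ [k] with i < j, and each edge {u,v} ∈ E(G) with u < v, consider the tuple assigning value u to coordinate i, value v to coordinate j, and 'null' (⊥) to all other coordinates in [k]. Then: G contains a k-clique if and only if one can choose, for every pair {i,j}, an edge e_{{i,j}} = {u_{{i,j}}, v_{{i,j}}} such that the resulting family of tuples is coordinatewise selectively equal, i.e., for every coordinate q ∈ [k], all non-null values assigned to coordinate q (across all pairs {i,j} with q ∈ {i,j}) are equal. -/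
/-- Correctness of the reduction from k-Clique to PSP over Multi-Equality
(Proposition 4.8): `G` has a `k`-clique iff for every pair `{i,j}` (`i < j`) one
can choose an edge `{a i j, b i j}` (with `a i j < b i j`), assigning `a i j` to
slot `i`, `b i j` to slot `j`, and null elsewhere, such that at every coordinate
`q` all non-null values coincide. -/
theorem clique_iff_consistent_edges (N k : ℕ) (hk : 2 ≤ k)
    (G : SimpleGraph (Fin N)) :
    (∃ u : Fin k → Fin N, ∀ i j : Fin k, i ≠ j → G.Adj (u i) (u j)) ↔
    (∃ a b : Fin k → Fin k → Fin N,
      (∀ i j : Fin k, i < j → a i j < b i j ∧ G.Adj (a i j) (b i j)) ∧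
      (∀ (q i j i' j' : Fin k), i < j → i' < j' →
        ∀ x x' : Fin N,
          (if q = i then some (a i j) else
            if q = j then some (b i j) else none) = some x →
          (if q = i' then some (a i' j') else
            if q = j' then some (b i' j') else none) = some x' →
          x = x')) := by
  constructor
  · rintro ⟨u, hu⟩
    have hinj : Function.Injective u := by
      intro i j hij
      by_contra hne
      exact (hu i j hne).ne hij
    set s : Finset (Fin N) := Finset.image u Finset.univ with hs
    have hcard : s.card = k := by
      rw [hs, Finset.card_image_of_injective _ hinj, Finset.card_univ, Fintype.card_fin]
    set v : Fin k → Fin N := fun q => (s.orderIsoOfFin hcard q : Fin N) with hv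
    have hvmono : StrictMono v := fun i j hij => by
      exact (s.orderIsoOfFin hcard).strictMono hij
    have hvadj : ∀ i j : Fin k, i ≠ j → G.Adj (v i) (v j) := by
      intro i j hij
      have hvi : v i ∈ s := (s.orderIsoOfFin hcard i).2
      have hvj : v j ∈ s := (s.orderIsoOfFin hcard j).2
      rw [hs, Finset.mem_image] at hvi hvj
      obtain ⟨p, -, hp⟩ := hvi
      obtain ⟨p', -, hp'⟩ := hvj
      have hvne : v i ≠ v j := fun h => hij ((s.orderIsoOfFin hcard).injective (Subtype.ext h))
      rw [← hp, ← hp']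
      exact hu p p' (fun h => hvne (by rw [← hp, ← hp', h]))
    refine ⟨fun i _ => v i, fun _ j => v j, fun i j hij => ⟨hvmono hij, hvadj i j hij.ne⟩, ?_⟩
    intro q i j i' j' hij hij' x x' hx hx'
    have key : ∀ (i j : Fin k) (x : Fin N),
        (if q = i then some (v i) else if q = j then some (v j) else none) = some x →
        x = v q := by
      intro i j x hx
      split_ifs at hx with h1 h2
      · subst h1; exact (Option.some_injective _ hx).symm
      · subst h2; exact (Option.some_injective _ hx).symm
    rw [key i j x hx]; exact (key i' j' x' hx').symm
  · rintro ⟨a, b, h1, h2⟩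
    set u : Fin k → Fin N := fun q =>
      if h : q.val + 1 < k then a q ⟨q.val + 1, h⟩ else b ⟨k - 2, by omega⟩ q with hu
    have key : ∀ i j : Fin k, i < j → u i = a i j ∧ u j = b i j := by
      intro i j hij
      have hjk : j.val < k := j.2
      have hik : i.val + 1 < k := by
        have h' : i.val < j.val := hij
        omega
      constructor
      · have hui : u i = a i ⟨i.val + 1, hik⟩ := by rw [hu]; simp [hik]
        rw [hui]
        refine h2 i i ⟨i.val + 1, hik⟩ i j (Fin.lt_def.mpr (Nat.lt_succ_self _)) hij _ _ ?_ ?_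
        · simp
        · simp
      · by_cases hj : j.val + 1 < k
        · have huj : u j = a j ⟨j.val + 1, hj⟩ := by rw [hu]; simp [hj]
          rw [huj]
          refine h2 j j ⟨j.val + 1, hj⟩ i j (Fin.lt_def.mpr (Nat.lt_succ_self _)) hij _ _ ?_ ?_
          · simp
          · have : j ≠ i := hij.ne'
            simp [this]
        · have hjval : j.val = k - 1 := by omega
          have huj : u j = b ⟨k - 2, by omega⟩ j := by rw [hu]; simp [hj]
          rw [huj]
          refine h2 j ⟨k - 2, by omega⟩ j i j ?_ hij _ _ ?_ ?_
          · exact Fin.lt_def.mpr (by simp only [Fin.val_mk]; omega)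
          · have : j ≠ (⟨k - 2, by omega⟩ : Fin k) := by
              simp [Fin.ext_iff]; omega
            simp [this]
          · have : j ≠ i := hij.ne'
            simp [this]
    refine ⟨u, fun i j hij => ?_⟩
    rcases lt_or_gt_of_ne hij with h | h
    · obtain ⟨ha, hb⟩ := key i j h
      rw [ha, hb]; exact (h1 i j h).2
    · obtain ⟨ha, hb⟩ := key j i h
      rw [ha, hb]; exact ((h1 j i h).2).symm
end

section
/- Let Γ = (U = ⋃_{i∈[q]} U_i, W = ⋃_{j∈[k]} W_j; E) be a label cover instance and let G = (A, B; E') be the Red-Blue Dominating Set instance built from Γ via hypercube partition systems: A = W; B = ⋃_{i∈[q]} M^i where M^i = [k]^{U_i}; and for w ∈ W_j and z ∈ M^i, {w, z} ∈ E' iff z(u) = j for some u ∈ U_i with {u, w} ∈ E. Then a set S ⊆ W covers every left super-node of Γ as a multi-labeling if and only if S dominates every vertex of B in G. Consequently MinLabel(Γ) equals the minimum size of a subset of A dominating all of B. -/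
/-- Correctness of the reduction from MinLabel to Red-Blue Dominating Set via
hypercube partition systems (Lemma A.2): `A = W`, `B = ⋃_i M^i` with
`M^i = [k]^{U_i}`, and `w ∈ W_j` is adjacent to `z ∈ M^i` iff `z(u) = j` for some
`u ∈ U_i` with `{u,w} ∈ E`. A set `S ⊆ W` covers every left super-node as a
multi-labeling iff it dominates every vertex of `B`; consequently `MinLabel(Γ)`
equals the minimum size of a subset of `A` dominating all of `B`. -/
theorem minlabel_eq_redblue_domset (q k : ℕ) (U W : Type)
    [Fintype U] [Fintype W]
    (pu : U → Fin q) (pw : W → Fin k) (E : U → W → Prop) :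
    (∀ S : Finset W,
      ((∀ i : Fin q, ∃ u, pu u = i ∧
          ∀ j : Fin k, ∃ w ∈ S, pw w = j ∧ E u w) ↔
       (∀ (i : Fin q) (z : {u : U // pu u = i} → Fin k),
          ∃ w ∈ S, ∃ u : {u : U // pu u = i}, z u = pw w ∧ E u.1 w))) ∧
    sInf {n : ℕ | ∃ S : Finset W, S.card = n ∧
        ∀ i : Fin q, ∃ u, pu u = i ∧
          ∀ j : Fin k, ∃ w ∈ S, pw w = j ∧ E u w}
      = sInf {n : ℕ | ∃ S : Finset W, S.card = n ∧
          ∀ (i : Fin q) (z : {u : U // pu u = i} → Fin k),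
            ∃ w ∈ S, ∃ u : {u : U // pu u = i}, z u = pw w ∧ E u.1 w} := by
  have main : ∀ S : Finset W,
      ((∀ i : Fin q, ∃ u, pu u = i ∧
          ∀ j : Fin k, ∃ w ∈ S, pw w = j ∧ E u w) ↔
       (∀ (i : Fin q) (z : {u : U // pu u = i} → Fin k),
          ∃ w ∈ S, ∃ u : {u : U // pu u = i}, z u = pw w ∧ E u.1 w)) := by
    intro S
    constructor
    · intro h i z
      obtain ⟨u, hu, hcov⟩ := h i
      obtain ⟨w, hwS, hpw, hE⟩ := hcov (z ⟨u, hu⟩)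
      exact ⟨w, hwS, ⟨u, hu⟩, hpw.symm, hE⟩
    · intro h i
      by_contra hc
      push_neg at hc
      choose f hf using hc
      obtain ⟨w, hwS, u, hz, hE⟩ := h i (fun u => f u.1 u.2)
      exact hf u.1 u.2 w hwS hz.symm hE
  refine ⟨main, ?_⟩
  congr 1
  ext n
  constructor <;> rintro ⟨S, hS, h⟩
  · exact ⟨S, hS, (main S).mp h⟩
  · exact ⟨S, hS, (main S).mpr h⟩
end
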